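/- arXiv:math/0408173 — 2 statements merged into one kernel-verified Lean document; each statement's English description precedes it below -/
import Mathlib

section
/- For every symmetric measurable function W : [0,1]^2 -> [0,1] and every simple graph F with k vertices, Var(t(F, G(n,W))) <= 3k^2/n. -/
/-! `t(F, G(n,W))` is `n⁻ᵏ` times the sum, over all maps `f : [k] → [n]`, of the indicator that
`f` is a homomorphism into `G(n,W)`. Whether `f` is a homomorphism depends only on the data
`(x_i, u_i)` of the vertices `i` in the image of `f`, and these data are independent across
vertices; hence maps with disjoint images have uncorrelated indicators, while any other
covariance is at most `1`. At most `k² n^(2k-1)` pairs of maps have intersecting images, so the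
variance is at most `k²/n`. -/

open MeasureTheory Finset
open scoped Classical

/-- The uniform probability measure on `[0,1] ⊆ ℝ`. -/
noncomputable def unif01 : Measure ℝ := volume.restrict (Set.Icc 0 1)

/-- Number of injective graph homomorphisms from `F` to `G`. -/
noncomputable def injCount {α β : Type} [Fintype α] [Fintype β]
    (F : SimpleGraph α) (G : SimpleGraph β) : ℕ :=
  Fintype.card {f : α → β // Function.Injective f ∧ ∀ a b, F.Adj a b → G.Adj (f a) (f b)}

/-- The `W`-random graph on `[n]` determined by the vertex values
`x : Fin n → ℝ` and the family of independent uniform coin flips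
`u : Fin n → Fin n → ℝ`: distinct vertices `i,j` are joined iff
`u (min i j) (max i j) < W (x i) (x j)`. -/
def wRandom (n : ℕ) (W : ℝ → ℝ → ℝ) (x : Fin n → ℝ) (u : Fin n → Fin n → ℝ) :
    SimpleGraph (Fin n) :=
  SimpleGraph.fromRel (fun i j => u (min i j) (max i j) < W (x i) (x j))

/-- The probability measure governing `wRandom`: the `x i` are i.i.d. uniform on `[0,1]`
and the coin flips are i.i.d. uniform on `[0,1]`. -/
noncomputable def wMeasure (n : ℕ) : Measure ((Fin n → ℝ) × (Fin n → Fin n → ℝ)) :=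
  (Measure.pi fun _ => unif01).prod (Measure.pi fun _ => Measure.pi fun _ => unif01)

/-- The homomorphism density `t(F,W)` of a simple graph `F` in a symmetric
function `W`. -/
noncomputable def tDens {k : ℕ} (F : SimpleGraph (Fin k)) (W : ℝ → ℝ → ℝ) : ℝ :=
  ∫ x : Fin k → ℝ,
    (∏ e ∈ F.edgeFinset,
      Sym2.lift ⟨fun a b => (W (x a) (x b) + W (x b) (x a)) / 2,
        fun a b => by ring⟩ e) ∂(Measure.pi fun _ => unif01)


/-- Number of graph homomorphisms from `F` to `G`. -/
noncomputable def homCount {α β : Type} [Fintype α] [Fintype β]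
    (F : SimpleGraph α) (G : SimpleGraph β) : ℕ :=
  Fintype.card {f : α → β // ∀ a b, F.Adj a b → G.Adj (f a) (f b)}

open ProbabilityTheory

lemma ProbabilityTheory.iIndepFun.of_comp_measurableEquiv {Ω Ω' ι : Type*} [MeasurableSpace Ω]
    [MeasurableSpace Ω'] {β : ι → Type*} [∀ i, MeasurableSpace (β i)] {μ : Measure Ω}
    {ν : Measure Ω'} {e : Ω ≃ᵐ Ω'} (he : MeasurePreserving e μ ν) {f : ∀ i, Ω' → β i}
    (h : iIndepFun (fun i => f i ∘ e) μ) : iIndepFun f ν := by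
  rw [iIndepFun_iff_measure_inter_preimage_eq_mul] at h ⊢
  intro S sets hsets
  simp only [← he.measure_preimage_equiv, Set.preimage_iInter₂]
  exact h S hsets

section Covariance

variable {Ω : Type*} [MeasurableSpace Ω] {μ : Measure Ω} [IsProbabilityMeasure μ]

lemma covariance_le_one_of_mem_Icc {X Y : Ω → ℝ} (hX : AEMeasurable X μ)
    (hY : AEMeasurable Y μ) (hX01 : ∀ ω, X ω ∈ Set.Icc 0 1) (hY01 : ∀ ω, Y ω ∈ Set.Icc 0 1) :
    cov[X, Y; μ] ≤ 1 := by
  have hXY_le : μ[X * Y] ≤ 1 := by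
    calc μ[X * Y] ≤ ∫ _, (1 : ℝ) ∂μ :=
          integral_mono_of_nonneg (.of_forall fun ω => mul_nonneg (hX01 ω).1 (hY01 ω).1)
            (integrable_const 1)
            (.of_forall fun ω => mul_le_one₀ (hX01 ω).2 (hY01 ω).1 (hY01 ω).2)
      _ = 1 := by simp
  have hXY_nonneg : 0 ≤ μ[X] * μ[Y] :=
    mul_nonneg (integral_nonneg fun ω => (hX01 ω).1) (integral_nonneg fun ω => (hY01 ω).1)
  rw [covariance_eq_sub (memLp_of_bounded (.of_forall hX01) hX.aestronglyMeasurable 2)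
    (memLp_of_bounded (.of_forall hY01) hY.aestronglyMeasurable 2)]
  linarith

lemma variance_sum_le_card_of_indepFun {ι : Type*} [Fintype ι] {X : ι → Ω → ℝ}
    (hX : ∀ i, AEMeasurable (X i) μ) (hX01 : ∀ i ω, X i ω ∈ Set.Icc 0 1) (D : Finset (ι × ι))
    (hD : ∀ i j, (i, j) ∉ D → IndepFun (X i) (X j) μ) :
    Var[fun ω => ∑ i, X i ω; μ] ≤ #D := by
  have hmem : ∀ i, MemLp (X i) 2 μ := fun i =>
    memLp_of_bounded (.of_forall (hX01 i)) (hX i).aestronglyMeasurable 2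
  have hcov : ∀ i j, cov[X i, X j; μ] ≤ if (i, j) ∈ D then 1 else 0 := by
    intro i j
    split_ifs with hij
    · exact covariance_le_one_of_mem_Icc (hX i) (hX j) (hX01 i) (hX01 j)
    · exact ((hD i j hij).covariance_eq_zero (hmem i) (hmem j)).le
  calc Var[fun ω => ∑ i, X i ω; μ] = ∑ i, ∑ j, cov[X i, X j; μ] := variance_fun_sum hmem
    _ ≤ ∑ i, ∑ j, if (i, j) ∈ D then (1 : ℝ) else 0 := by gcongr with i _ j _; exact hcov i j
    _ = #D := by
      rw [← Fintype.sum_prod_type', Finset.sum_boole, Finset.filter_mem_eq_inter,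
        Finset.univ_inter]

end Covariance

section Counting

variable {α β : Type*} [Fintype α] [DecidableEq α] [Fintype β]

/-- On pairs with `f a = g b` the value `g b` is redundant; overwriting it by a free `c : β`
reaches every pair exactly once. -/
noncomputable def applyEqApplyProdEquiv (a b : α) :
    {p : (α → β) × (α → β) // p.1 a = p.2 b} × β ≃ (α → β) × (α → β) where
  toFun q := (q.1.1.1, Function.update q.1.1.2 b q.2)
  invFun p := (⟨(p.1, Function.update p.2 b (p.1 a)), by simp⟩, p.2 b)
  left_inv := by
    rintro ⟨⟨⟨f, g⟩, hfg : f a = g b⟩, c⟩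
    simp [hfg]
  right_inv := by
    rintro ⟨f, g⟩
    simp

lemma card_apply_eq_apply_mul_card (a b : α) :
    #{p : (α → β) × (α → β) | p.1 a = p.2 b} * Fintype.card β
      = Fintype.card β ^ Fintype.card α * Fintype.card β ^ Fintype.card α := by
  have := Fintype.card_congr (applyEqApplyProdEquiv (β := β) a b)
  simpa [Fintype.card_prod, Fintype.card_subtype, Fintype.card_fun] using this

lemma card_range_not_disjoint_mul_card_le :
    #{p : (α → β) × (α → β) | ¬Disjoint (Set.range p.1) (Set.range p.2)} * Fintype.card β
      ≤ Fintype.card α ^ 2 * (Fintype.card β ^ Fintype.card α) ^ 2 := by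
  have hcover :
      ({p : (α → β) × (α → β) | ¬Disjoint (Set.range p.1) (Set.range p.2)} : Finset _)
        = (univ : Finset (α × α)).biUnion fun ab => {p | p.1 ab.1 = p.2 ab.2} := by
    ext p
    simp [Set.not_disjoint_iff, eq_comm]
  calc #{p : (α → β) × (α → β) | ¬Disjoint (Set.range p.1) (Set.range p.2)} * Fintype.card β
      ≤ (∑ ab : α × α, #{p : (α → β) × (α → β) | p.1 ab.1 = p.2 ab.2}) * Fintype.card β := by
        rw [hcover]
        gcongr
        exact card_biUnion_le
    _ = Fintype.card α ^ 2 * (Fintype.card β ^ Fintype.card α) ^ 2 := by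
        simp [Finset.sum_mul, card_apply_eq_apply_mul_card, sq]

end Counting

noncomputable def homIndicator {α β : Type} (F : SimpleGraph α) (G : SimpleGraph β)
    (f : α → β) : ℝ :=
  if ∀ a b, F.Adj a b → G.Adj (f a) (f b) then 1 else 0

lemma homIndicator_mem_Icc {α β : Type} (F : SimpleGraph α) (G : SimpleGraph β) (f : α → β) :
    homIndicator F G f ∈ Set.Icc 0 1 := by
  unfold homIndicator
  split_ifs <;> simp

lemma homCount_eq_sum_homIndicator {α β : Type} [Fintype α] [DecidableEq α] [Fintype β]
    (F : SimpleGraph α) (G : SimpleGraph β) :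
    (homCount F G : ℝ) = ∑ f : α → β, homIndicator F G f := by
  unfold homCount homIndicator
  rw [Fintype.card_subtype]
  convert (Finset.sum_boole _ _).symm

instance : IsProbabilityMeasure unif01 :=
  ⟨by rw [unif01, Measure.restrict_apply_univ, Real.volume_Icc]; norm_num⟩

instance (n : ℕ) : IsProbabilityMeasure (wMeasure n) := by
  unfold wMeasure
  infer_instance

section WRandom

variable {n k : ℕ}

/-- The randomness owned by vertex `i`: its value `x i` and its row `u i` of coin flips. The edge
`ij` only reads the flip `u (min i j) (max i j)`, owned by one of its endpoints. -/
def vertexLabel (i : Fin n) (ω : (Fin n → ℝ) × (Fin n → Fin n → ℝ)) : ℝ × (Fin n → ℝ) :=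
  (ω.1 i, ω.2 i)

lemma measurable_vertexLabel (i : Fin n) : Measurable (vertexLabel i) :=
  ((measurable_pi_apply i).comp measurable_fst).prodMk
    ((measurable_pi_apply i).comp measurable_snd)

lemma iIndepFun_vertexLabel : iIndepFun (vertexLabel (n := n)) (wMeasure n) :=
  .of_comp_measurableEquiv (measurePreserving_arrowProdEquivProdArrow ℝ (Fin n → ℝ) (Fin n)
    (fun _ => unif01) (fun _ => Measure.pi fun _ => unif01))
    (iIndepFun_pi (X := fun _ => id) fun _ => aemeasurable_id)

abbrev vertexSigma (s : Set (Fin n)) : MeasurableSpace ((Fin n → ℝ) × (Fin n → Fin n → ℝ)) :=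
  ⨆ i ∈ s, MeasurableSpace.comap (vertexLabel i) inferInstance

lemma vertexSigma_le (s : Set (Fin n)) :
    vertexSigma s ≤ (inferInstance : MeasurableSpace ((Fin n → ℝ) × (Fin n → Fin n → ℝ))) :=
  iSup₂_le fun i _ => (measurable_vertexLabel i).comap_le

lemma measurable_vertexLabel_vertexSigma {s : Set (Fin n)} {i : Fin n} (hi : i ∈ s) :
    Measurable[vertexSigma s] (vertexLabel i) :=
  .of_comap_le (le_iSup₂ (f := fun i (_ : i ∈ s) => MeasurableSpace.comap (vertexLabel i) _) i hi)

lemma measurableSet_adj_wRandom {W : ℝ → ℝ → ℝ} (hW : Measurable (Function.uncurry W))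
    {s : Set (Fin n)} {i j : Fin n} (hi : i ∈ s) (hj : j ∈ s) :
    MeasurableSet[vertexSigma s] {ω | (wRandom n W ω.1 ω.2).Adj i j} := by
  have hx : ∀ l ∈ s, Measurable[vertexSigma s] fun ω => ω.1 l := fun l hl =>
    measurable_fst.comp (measurable_vertexLabel_vertexSigma hl)
  have hu : ∀ l ∈ s, ∀ m, Measurable[vertexSigma s] fun ω => ω.2 l m := fun l hl m =>
    (measurable_pi_apply m).comp (measurable_snd.comp (measurable_vertexLabel_vertexSigma hl))
  have hcoin : ∀ i ∈ s, ∀ j ∈ s, MeasurableSet[vertexSigma s]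
      {ω | ω.2 (min i j) (max i j) < W (ω.1 i) (ω.1 j)} := fun i hi j hj =>
    measurableSet_lt (hu _ (min_rec' (· ∈ s) hi hj) _) (hW.comp ((hx i hi).prodMk (hx j hj)))
  have hadj : {ω : (Fin n → ℝ) × (Fin n → Fin n → ℝ) | (wRandom n W ω.1 ω.2).Adj i j}
      = {_ω | i ≠ j} ∩ ({ω | ω.2 (min i j) (max i j) < W (ω.1 i) (ω.1 j)}
        ∪ {ω | ω.2 (min j i) (max j i) < W (ω.1 j) (ω.1 i)}) := by
    ext ω
    simp [wRandom]
  rw [hadj]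
  exact (MeasurableSet.const _).inter ((hcoin i hi j hj).union (hcoin j hj i hi))

lemma measurable_homIndicator_wRandom (F : SimpleGraph (Fin k)) {W : ℝ → ℝ → ℝ}
    (hW : Measurable (Function.uncurry W)) (f : Fin k → Fin n) :
    Measurable[vertexSigma (Set.range f)] fun ω => homIndicator F (wRandom n W ω.1 ω.2) f := by
  refine Measurable.ite ?_ measurable_const measurable_const
  simp only [Set.ofPred_forall]
  exact .iInter fun a => .iInter fun b => .iInter fun _ =>
    measurableSet_adj_wRandom hW (Set.mem_range_self a) (Set.mem_range_self b)

lemma indepFun_homIndicator_wRandom (F : SimpleGraph (Fin k)) {W : ℝ → ℝ → ℝ}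
    (hW : Measurable (Function.uncurry W)) {f g : Fin k → Fin n}
    (hfg : Disjoint (Set.range f) (Set.range g)) :
    IndepFun (fun ω => homIndicator F (wRandom n W ω.1 ω.2) f)
      (fun ω => homIndicator F (wRandom n W ω.1 ω.2) g) (wMeasure n) := by
  have hsigma := indep_iSup_of_disjoint (fun i => (measurable_vertexLabel i).comap_le)
    ((iIndepFun_iff_iIndep _ _ _).1 iIndepFun_vertexLabel) hfg
  rw [IndepFun_iff_Indep]
  exact indep_of_indep_of_le_right
    (indep_of_indep_of_le_left hsigma (measurable_homIndicator_wRandom F hW f).comap_le)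
    (measurable_homIndicator_wRandom F hW g).comap_le

lemma variance_sum_homIndicator_wRandom_le (F : SimpleGraph (Fin k)) {W : ℝ → ℝ → ℝ}
    (hW : Measurable (Function.uncurry W)) :
    Var[fun ω => ∑ f, homIndicator F (wRandom n W ω.1 ω.2) f; wMeasure n]
      ≤ #{p : (Fin k → Fin n) × (Fin k → Fin n) | ¬Disjoint (Set.range p.1) (Set.range p.2)} :=
  variance_sum_le_card_of_indepFun
    (fun f =>
      ((measurable_homIndicator_wRandom F hW f).mono (vertexSigma_le _) le_rfl).aemeasurable)
    (fun f _ => homIndicator_mem_Icc F _ f) _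
    fun f g hfg => indepFun_homIndicator_wRandom F hW (by simpa using hfg)

end WRandom

theorem variance_homDensity_wRandom_general {n k : ℕ}
    (F : SimpleGraph (Fin k)) (W : ℝ → ℝ → ℝ)
    (hWmeas : Measurable (Function.uncurry W)) :
    ProbabilityTheory.variance
        (fun ω : (Fin n → ℝ) × (Fin n → Fin n → ℝ) =>
          (homCount F (wRandom n W ω.1 ω.2) : ℝ) / (n : ℝ) ^ k)
        (wMeasure n)
      ≤ 3 * (k : ℝ) ^ 2 / (n : ℝ) := by
  have hvar := variance_sum_homIndicator_wRandom_le (n := n) F hWmeas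
  have hcount := card_range_not_disjoint_mul_card_le (α := Fin k) (β := Fin n)
  simp only [Fintype.card_fin] at hcount
  simp_rw [homCount_eq_sum_homIndicator, div_eq_mul_inv _ ((n : ℝ) ^ k)]
  rw [variance_mul_const]
  obtain rfl | hn := n.eq_zero_or_pos
  -- `3 k² / 0 = 0`; the variance vanishes because no map `Fin k → Fin 0` has a nonempty range.
  · rw [le_antisymm (by simpa using hvar) (variance_nonneg _ _), zero_mul]
    simp
  set D := #{p : (Fin k → Fin n) × (Fin k → Fin n) | ¬Disjoint (Set.range p.1) (Set.range p.2)}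
  calc _ ≤ (D : ℝ) / ((n : ℝ) ^ k) ^ 2 := by
        rw [div_eq_mul_inv, inv_pow]
        gcongr
    _ ≤ 3 * (k : ℝ) ^ 2 / n := by
      rw [div_le_div_iff₀ (by positivity) (by positivity)]
      have : (D : ℝ) * n ≤ k ^ 2 * ((n : ℝ) ^ k) ^ 2 := by exact_mod_cast hcount
      linarith [show (0 : ℝ) ≤ k ^ 2 * ((n : ℝ) ^ k) ^ 2 by positivity]

/-- `Var(t(F, G(n,W))) ≤ 3k²/n` for the `W`-random graph `G(n,W)`,
where `t(F,G) = hom(F,G)/n^k` is the homomorphism density. -/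
theorem variance_homDensity_wRandom {n k : ℕ}
    (F : SimpleGraph (Fin k)) (W : ℝ → ℝ → ℝ)
    (hWmeas : Measurable (Function.uncurry W))
    (hWsymm : ∀ x y, W x y = W y x)
    (hWmem : ∀ x y, W x y ∈ Set.Icc (0 : ℝ) 1) :
    ProbabilityTheory.variance
        (fun ω : (Fin n → ℝ) × (Fin n → Fin n → ℝ) =>
          (homCount F (wRandom n W ω.1 ω.2) : ℝ) / (n : ℝ) ^ k)
        (wMeasure n)
      ≤ 3 * (k : ℝ) ^ 2 / (n : ℝ) :=
  variance_homDensity_wRandom_general F W hWmeas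
end

section
/- Let U, W : [0,1]^2 -> [0,1] be symmetric integrable functions. Then for every finite simple graph F, |t(F,U) - t(F,W)| <= |E(F)| * ||U - W||_□, where ||·||_□ is the rectangle (cut) norm. -/
/-!
Replace the factors `U` by `W` one edge at a time. Swapping the factor of an edge `pq`
changes the integrand by `(U - W)(x_p, x_q)` times a product of `[0,1]`-valued factors, each
of which ignores `x_p` or ignores `x_q`. Integrating over `x_p, x_q` innermost, each such
change is a double integral `∫∫ f(a) g(b) (U - W)(a, b)` with `0 ≤ f, g ≤ 1`, and that is at
most the cut norm: integrating `h` against a `[0,1]`-valued `f` gives at most `|∫_A h|` for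
`A = {h ≥ 0}` or `A = {h < 0}`.
-/

open MeasureTheory Finset
open scoped Classical

/-- The rectangle (cut) norm of `U : [0,1]² → ℝ`:
`sup_{A,B} |∫_A ∫_B U|` over measurable sets `A, B ⊆ [0,1]`. -/
noncomputable def cutNorm (U : ℝ → ℝ → ℝ) : ℝ :=
  sSup {r : ℝ | ∃ A B : Set ℝ, MeasurableSet A ∧ MeasurableSet B ∧
    r = |∫ x in A, ∫ y in B, U x y ∂unif01 ∂unif01|}

open Function

instance inst_s5 : IsProbabilityMeasure unif01 :=
  ⟨by simp [unif01, Real.volume_Icc]⟩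

lemma abs_mul_le_of_mem_Icc {a b C : ℝ} (ha : a ∈ Set.Icc (0 : ℝ) 1) (hb : |b| ≤ C) :
    |a * b| ≤ C := by
  rw [abs_mul, abs_of_nonneg ha.1]
  exact (mul_le_of_le_one_left (abs_nonneg b) ha.2).trans hb

section Integral

variable {α : Type*} [MeasurableSpace α] {μ : Measure α}

lemma abs_setIntegral_le_of_abs_le [IsProbabilityMeasure μ] {f : α → ℝ} {C : ℝ}
    (hC : ∀ x, |f x| ≤ C) (s : Set α) : |∫ x in s, f x ∂μ| ≤ C :=
  have := nonempty_of_isProbabilityMeasure μ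
  calc |∫ x in s, f x ∂μ| ≤ C * μ.real s :=
        norm_setIntegral_le_of_norm_le_const (f := f) (measure_lt_top μ s) fun x _ => hC x
    _ ≤ C := mul_le_of_le_one_right ((abs_nonneg _).trans (hC (Classical.arbitrary _)))
        measureReal_le_one

lemma abs_integral_le_of_abs_le [IsProbabilityMeasure μ] {f : α → ℝ} {C : ℝ}
    (hC : ∀ x, |f x| ≤ C) : |∫ x, f x ∂μ| ≤ C := by
  simpa using abs_setIntegral_le_of_abs_le (μ := μ) hC Set.univ

/-- The witness is `{h ≥ 0}` or `{h < 0}`. -/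
lemma exists_abs_integral_mul_le_abs_setIntegral {f h : α → ℝ} (hf : Measurable f)
    (hf01 : ∀ x, f x ∈ Set.Icc (0 : ℝ) 1) (hh : Measurable h) (hhi : Integrable h μ) :
    ∃ A, MeasurableSet A ∧ |∫ x, f x * h x ∂μ| ≤ |∫ x in A, h x ∂μ| := by
  set A := {x | 0 ≤ h x}
  have hA : MeasurableSet A := measurableSet_le measurable_const hh
  have hfh : Integrable (fun x => f x * h x) μ :=
    hhi.bdd_mul hf.aestronglyMeasurable (c := 1) <| ae_of_all _ fun x => by
      simpa [abs_of_nonneg (hf01 x).1] using (hf01 x).2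
  have upper : ∫ x, f x * h x ∂μ ≤ ∫ x in A, h x ∂μ := by
    rw [← integral_indicator hA]
    refine integral_mono hfh (hhi.indicator hA) fun x => ?_
    by_cases hx : 0 ≤ h x
    · simpa [A, hx] using mul_le_of_le_one_left hx (hf01 x).2
    · simpa [A, hx] using mul_nonpos_of_nonneg_of_nonpos (hf01 x).1 (not_le.1 hx).le
  have lower : ∫ x in Aᶜ, h x ∂μ ≤ ∫ x, f x * h x ∂μ := by
    rw [← integral_indicator hA.compl]
    refine integral_mono (hhi.indicator hA.compl) hfh fun x => ?_
    by_cases hx : 0 ≤ h x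
    · simpa [A, hx] using mul_nonneg (hf01 x).1 hx
    · simpa [A, hx] using le_mul_of_le_one_left (not_le.1 hx).le (hf01 x).2
  rcases le_total 0 (∫ x, f x * h x ∂μ) with hpos | hneg
  · refine ⟨A, hA, ?_⟩
    rw [abs_of_nonneg hpos]
    exact upper.trans (le_abs_self _)
  · refine ⟨Aᶜ, hA.compl, ?_⟩
    rw [abs_of_nonpos hneg]
    exact (neg_le_neg lower).trans (neg_le_abs _)

end Integral

section CutNorm

variable {D : ℝ → ℝ → ℝ} {C : ℝ}

lemma abs_setIntegral_setIntegral_le_cutNorm (hDC : ∀ x y, |D x y| ≤ C) {A B : Set ℝ}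
    (hA : MeasurableSet A) (hB : MeasurableSet B) :
    |∫ x in A, ∫ y in B, D x y ∂unif01 ∂unif01| ≤ cutNorm D := by
  refine le_csSup ⟨C, ?_⟩ ⟨A, B, hA, hB, rfl⟩
  rintro _ ⟨A', B', -, -, rfl⟩
  exact abs_setIntegral_le_of_abs_le (fun x => abs_setIntegral_le_of_abs_le (hDC x) B') A'

lemma abs_integral_integral_mul_le_cutNorm (hD : Measurable (uncurry D))
    (hDC : ∀ x y, |D x y| ≤ C) {f g : ℝ → ℝ} (hf : Measurable f)
    (hf01 : ∀ x, f x ∈ Set.Icc (0 : ℝ) 1) (hg : Measurable g)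
    (hg01 : ∀ y, g y ∈ Set.Icc (0 : ℝ) 1) :
    |∫ x, ∫ y, f x * g y * D x y ∂unif01 ∂unif01| ≤ cutNorm D := by
  have hgD : Measurable (uncurry fun x y => g y * D x y) := (hg.comp measurable_snd).mul hD
  have hgDC : ∀ x y, |g y * D x y| ≤ C := fun x y => abs_mul_le_of_mem_Icc (hg01 y) (hDC x y)
  set h := fun x => ∫ y, g y * D x y ∂unif01
  have hh : Measurable h := (hgD.stronglyMeasurable.integral_prod_right).measurable
  have hhi : Integrable h unif01 := Integrable.of_bound hh.aestronglyMeasurable C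
    (ae_of_all _ fun x => abs_integral_le_of_abs_le (hgDC x))
  obtain ⟨A, hA, hfA⟩ := exists_abs_integral_mul_le_abs_setIntegral hf hf01 hh hhi
  set h' := fun y => ∫ x in A, D x y ∂unif01
  have hDsw : Measurable (uncurry fun y x => D x y) := hD.comp measurable_swap
  have hh' : Measurable h' := (hDsw.stronglyMeasurable.integral_prod_right).measurable
  have hh'i : Integrable h' unif01 := Integrable.of_bound hh'.aestronglyMeasurable C
    (ae_of_all _ fun y => abs_setIntegral_le_of_abs_le (fun x => hDC x y) A)
  obtain ⟨B, hB, hgB⟩ := exists_abs_integral_mul_le_abs_setIntegral hg hg01 hh' hh'i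
  have swapA : ∫ x in A, h x ∂unif01 = ∫ y, g y * h' y ∂unif01 := by
    simp only [h, h', ← integral_const_mul]
    exact integral_integral_swap (Integrable.of_bound hgD.aestronglyMeasurable C
      (ae_of_all _ fun p => hgDC p.1 p.2))
  have swapB : ∫ y in B, h' y ∂unif01 = ∫ x in A, ∫ y in B, D x y ∂unif01 ∂unif01 :=
    integral_integral_swap (Integrable.of_bound hDsw.aestronglyMeasurable C
      (ae_of_all _ fun p => hDC p.2 p.1))
  calc |∫ x, ∫ y, f x * g y * D x y ∂unif01 ∂unif01| = |∫ x, f x * h x ∂unif01| := by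
        simp only [h, mul_assoc, integral_const_mul]
    _ ≤ |∫ y, g y * h' y ∂unif01| := swapA ▸ hfA
    _ ≤ |∫ x in A, ∫ y in B, D x y ∂unif01 ∂unif01| := swapB ▸ hgB
    _ ≤ cutNorm D := abs_setIntegral_setIntegral_le_cutNorm hDC hA hB

end CutNorm

section Pi

variable {ι : Type*} [Fintype ι] [DecidableEq ι] {X : ι → Type*} [∀ i, MeasurableSpace (X i)]
  (μ : ∀ i, Measure (X i)) [∀ i, IsProbabilityMeasure (μ i)]

lemma measurePreserving_update_pi (i : ι) :
    MeasurePreserving (fun p : (∀ j, X j) × X i => update p.1 i p.2)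
      ((Measure.pi μ).prod (μ i)) (Measure.pi μ) := by
  refine ⟨measurable_update', (Measure.pi_eq fun s hs => ?_).symm⟩
  have hpre : (fun p : (∀ j, X j) × X i => update p.1 i p.2) ⁻¹' Set.univ.pi s
      = Set.univ.pi (update s i Set.univ) ×ˢ s i := by
    ext ⟨x, a⟩
    simp only [Set.mem_preimage, Set.mem_prod, Set.mem_univ_pi]
    constructor
    · intro H
      refine ⟨fun j => ?_, by simpa using H i⟩
      rcases eq_or_ne j i with rfl | hj
      · simp
      · simpa [hj] using H j
    · rintro ⟨H, ha⟩ j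
      rcases eq_or_ne j i with rfl | hj
      · simpa using ha
      · simpa [hj] using H j
  rw [Measure.map_apply measurable_update' (.univ_pi hs), hpre, Measure.prod_prod,
    Measure.pi_pi, ← Finset.mul_prod_erase _ _ (Finset.mem_univ i),
    ← Finset.mul_prod_erase _ (fun j => μ j (s j)) (Finset.mem_univ i)]
  simp only [update_self, measure_univ, one_mul]
  rw [mul_comm]
  congr 1
  refine Finset.prod_congr rfl fun j hj => ?_
  rw [update_of_ne (Finset.ne_of_mem_erase hj)]

lemma integral_pi_eq_integral_integral_update {f : (∀ j, X j) → ℝ}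
    (hf : Integrable f (Measure.pi μ)) (i : ι) :
    ∫ x, f x ∂Measure.pi μ = ∫ x, ∫ a, f (update x i a) ∂μ i ∂Measure.pi μ := by
  have hmp := measurePreserving_update_pi μ i
  have hmap := integral_map hmp.measurable.aemeasurable (hmp.map_eq.symm ▸ hf.1)
  rw [hmp.map_eq] at hmap
  exact hmap.trans (integral_prod _ ((hmp.integrable_comp hf.1).2 hf))

end Pi

lemma measurable_comp_apply_apply {ι : Type*} {D : ℝ → ℝ → ℝ} (hD : Measurable (uncurry D))
    (p q : ι) : Measurable fun x : ι → ℝ => D (x p) (x q) :=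
  hD.comp (f := fun x : ι → ℝ => (x p, x q))
    ((measurable_pi_apply p).prodMk (measurable_pi_apply q))

lemma update_update_eq_mul_mul {ι : Type*} [DecidableEq ι] {D : ℝ → ℝ → ℝ} {p q : ι}
    (hpq : p ≠ q) {A B : (ι → ℝ) → ℝ}
    (hAq : ∀ x a, A (update x q a) = A x) (hBp : ∀ x a, B (update x p a) = B x)
    (x : ι → ℝ) (a b : ℝ) :
    A (update (update x p a) q b) * B (update (update x p a) q b) *
        D (update (update x p a) q b p) (update (update x p a) q b q) =
      A (update x p a) * B (update x q b) * D a b := by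
  rw [hAq, update_comm hpq, hBp, update_self, update_of_ne hpq.symm, update_self]

noncomputable abbrev unifCube (ι : Type*) [Fintype ι] : Measure (ι → ℝ) :=
  Measure.pi fun _ : ι => unif01

section Cube

variable {ι : Type*} [Fintype ι] [DecidableEq ι] {D : ℝ → ℝ → ℝ} {C : ℝ}

/-- With all other coordinates fixed, the integral over `x p` and `x q` is bounded by
`abs_integral_integral_mul_le_cutNorm`. -/
lemma abs_integral_mul_mul_apply_le_cutNorm {p q : ι} (hpq : p ≠ q) {A B : (ι → ℝ) → ℝ}
    (hA : Measurable A) (hA01 : ∀ x, A x ∈ Set.Icc (0 : ℝ) 1)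
    (hAq : ∀ x a, A (update x q a) = A x)
    (hB : Measurable B) (hB01 : ∀ x, B x ∈ Set.Icc (0 : ℝ) 1)
    (hBp : ∀ x a, B (update x p a) = B x)
    (hD : Measurable (uncurry D)) (hDC : ∀ x y, |D x y| ≤ C) :
    |∫ x, A x * B x * D (x p) (x q) ∂unifCube ι| ≤ cutNorm D := by
  set Φ := fun x : ι → ℝ => A x * B x * D (x p) (x q)
  have hΦ : Measurable Φ := (hA.mul hB).mul (measurable_comp_apply_apply hD p q)
  have hΦC : ∀ x, |Φ x| ≤ C := fun x => abs_mul_le_of_mem_Icc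
    ⟨mul_nonneg (hA01 x).1 (hB01 x).1, mul_le_one₀ (hA01 x).2 (hB01 x).1 (hB01 x).2⟩
    (hDC _ _)
  set g := fun x => ∫ b, Φ (update x q b) ∂unif01
  have hΦq : Measurable (uncurry fun x b => Φ (update x q b)) := hΦ.comp measurable_update'
  have hg : Measurable g := hΦq.stronglyMeasurable.integral_prod_right.measurable
  have hgC : ∀ x, |g x| ≤ C := fun x => abs_integral_le_of_abs_le fun b => hΦC _
  have hinner : ∀ x, |∫ a, g (update x p a) ∂unif01| ≤ cutNorm D := fun x => by
    simp only [g, Φ, update_update_eq_mul_mul hpq hAq hBp]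
    exact abs_integral_integral_mul_le_cutNorm hD hDC
      (hA.comp (measurable_update x)) (fun a => hA01 _)
      (hB.comp (measurable_update x)) (fun b => hB01 _)
  rw [integral_pi_eq_integral_integral_update _
      (Integrable.of_bound hΦ.aestronglyMeasurable C (ae_of_all _ hΦC)) q,
    integral_pi_eq_integral_integral_update _
      (Integrable.of_bound hg.aestronglyMeasurable C (ae_of_all _ hgC)) p]
  exact abs_integral_le_of_abs_le hinner

end Cube

structure IsEdgeWeight {ι : Type*} [DecidableEq ι] (c : Sym2 ι → (ι → ℝ) → ℝ) : Prop where
  measurable : ∀ e, Measurable (c e)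
  mem_Icc : ∀ e x, c e x ∈ Set.Icc (0 : ℝ) 1
  update_eq : ∀ {e i}, i ∉ e → ∀ x a, c e (update x i a) = c e x

namespace IsEdgeWeight

variable {ι : Type*} [DecidableEq ι] {c u w : Sym2 ι → (ι → ℝ) → ℝ}

lemma measurable_prod (hc : IsEdgeWeight c) (s : Finset (Sym2 ι)) :
    Measurable fun x => ∏ e ∈ s, c e x :=
  Finset.measurable_prod s fun e _ => hc.measurable e

lemma prod_mem_Icc (hc : IsEdgeWeight c) (s : Finset (Sym2 ι)) (x : ι → ℝ) :
    ∏ e ∈ s, c e x ∈ Set.Icc (0 : ℝ) 1 :=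
  ⟨prod_nonneg fun e _ => (hc.mem_Icc e x).1,
    prod_le_one (fun e _ => (hc.mem_Icc e x).1) fun e _ => (hc.mem_Icc e x).2⟩

lemma piecewise (hu : IsEdgeWeight u) (hw : IsEdgeWeight w) (s : Finset (Sym2 ι)) :
    IsEdgeWeight (s.piecewise u w) := by
  refine ⟨fun e => ?_, fun e => ?_, fun {e} => ?_⟩ <;>
    by_cases he : e ∈ s <;> simp only [piecewise_eq_of_mem, piecewise_eq_of_notMem, he,
      not_false_eq_true]
  exacts [hu.measurable e, hw.measurable e, hu.mem_Icc e, hw.mem_Icc e, hu.update_eq,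
    hw.update_eq]

lemma integrable_prod_mul_prod (hu : IsEdgeWeight u) (hw : IsEdgeWeight w)
    {μ : Measure (ι → ℝ)} [IsFiniteMeasure μ] (s t : Finset (Sym2 ι)) :
    Integrable (fun x => (∏ e ∈ s, u e x) * ∏ e ∈ t, w e x) μ :=
  Integrable.of_bound ((hu.measurable_prod s).mul (hw.measurable_prod t)).aestronglyMeasurable 1
    (ae_of_all _ fun x => abs_mul_le_of_mem_Icc (hu.prod_mem_Icc s x)
      (abs_le_abs_of_nonneg (hw.prod_mem_Icc t x).1 (hw.prod_mem_Icc t x).2 |>.trans_eq abs_one))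

variable [Fintype ι] {D : ℝ → ℝ → ℝ} {C : ℝ}

/-- Factors through `p` do not see `x q`, the others do not see `x p`. -/
lemma abs_integral_apply_mul_prod_le_cutNorm (hc : IsEdgeWeight c) {p q : ι} (hpq : p ≠ q)
    {R : Finset (Sym2 ι)} (hR : s(p, q) ∉ R) (hD : Measurable (uncurry D))
    (hDC : ∀ x y, |D x y| ≤ C) :
    |∫ x, D (x p) (x q) * ∏ r ∈ R, c r x ∂unifCube ι| ≤ cutNorm D := by
  have hsplit : ∀ x, D (x p) (x q) * ∏ r ∈ R, c r x =
      (∏ r ∈ R with p ∈ r, c r x) * (∏ r ∈ R with p ∉ r, c r x) * D (x p) (x q) := fun x => by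
    rw [prod_filter_mul_prod_filter_not, mul_comm]
  simp_rw [hsplit]
  refine abs_integral_mul_mul_apply_le_cutNorm hpq (hc.measurable_prod _) (hc.prod_mem_Icc _)
    (fun x a => prod_congr rfl fun r hr => hc.update_eq ?_ x a) (hc.measurable_prod _)
    (hc.prod_mem_Icc _)
    (fun x a => prod_congr rfl fun r hr => hc.update_eq (mem_filter.1 hr).2 x a) hD hDC
  rw [mem_filter] at hr
  exact fun hq => hR ((Sym2.mem_and_mem_iff hpq).1 ⟨hr.2, hq⟩ ▸ hr.1)

/-- Replacing the factors `u e` by `w e` one edge at a time; the extra factor `∏ e ∈ R, w e`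
collects the edges already replaced. -/
theorem abs_integral_prod_mul_prod_sub_le (hu : IsEdgeWeight u) (hw : IsEdgeWeight w)
    (huw : ∀ p q x, u s(p, q) x - w s(p, q) x = D (x p) (x q))
    (hD : Measurable (uncurry D)) (hDC : ∀ x y, |D x y| ≤ C)
    {s : Finset (Sym2 ι)} (hs : ∀ e ∈ s, ¬e.IsDiag) {R : Finset (Sym2 ι)} (hsR : Disjoint s R) :
    |(∫ x, (∏ e ∈ s, u e x) * ∏ e ∈ R, w e x ∂unifCube ι) -
        ∫ x, (∏ e ∈ s, w e x) * ∏ e ∈ R, w e x ∂unifCube ι| ≤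
      #s * cutNorm D := by
  induction s using Finset.induction_on generalizing R with
  | empty => simp
  | @insert e s he ih =>
    induction e using Sym2.ind with
    | _ p q =>
    have hpq : p ≠ q := fun h => hs _ (mem_insert_self _ _) (Sym2.mk_isDiag_iff.2 h)
    have heR : s(p, q) ∉ R := disjoint_left.1 hsR (mem_insert_self _ _)
    have hsR' : Disjoint s (insert s(p, q) R) :=
      disjoint_insert_right.2 ⟨he, disjoint_of_subset_left (subset_insert _ _) hsR⟩
    have hhyb : ∀ x, (∏ e ∈ s, u e x) * ∏ e ∈ R, w e x = ∏ e ∈ s ∪ R, s.piecewise u w e x :=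
      fun x => by
        rw [prod_union (disjoint_of_subset_left (subset_insert _ _) hsR)]
        congr 1 <;> refine prod_congr rfl fun e he' => ?_
        · rw [piecewise_eq_of_mem _ _ _ he']
        · rw [piecewise_eq_of_notMem _ _ _ (disjoint_right.1 hsR' (mem_insert_of_mem he'))]
    have hstep : (∫ x, (∏ e ∈ insert s(p, q) s, u e x) * ∏ e ∈ R, w e x ∂unifCube ι) -
        ∫ x, (∏ e ∈ s, u e x) * ∏ e ∈ insert s(p, q) R, w e x ∂unifCube ι =
        ∫ x, D (x p) (x q) * ∏ e ∈ s ∪ R, s.piecewise u w e x ∂unifCube ι := by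
      rw [← integral_sub (hu.integrable_prod_mul_prod hw _ _)
        (hu.integrable_prod_mul_prod hw _ _)]
      refine integral_congr_ae (ae_of_all _ fun x => ?_)
      simp only [← hhyb, ← huw, prod_insert he, prod_insert heR]
      ring
    have hmove : ∀ x, (∏ e ∈ insert s(p, q) s, w e x) * ∏ e ∈ R, w e x =
        (∏ e ∈ s, w e x) * ∏ e ∈ insert s(p, q) R, w e x := fun x => by
      rw [prod_insert he, prod_insert heR]
      ring
    have hfirst := (hu.piecewise hw s).abs_integral_apply_mul_prod_le_cutNorm hpq
      (fun h => (mem_union.1 h).elim he heR) hD hDC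
    have hrest := ih (fun e he' => hs e (mem_insert_of_mem he')) hsR'
    simp only [hmove]
    calc _ ≤ _ :=
          abs_sub_le _ (∫ x, (∏ e ∈ s, u e x) * ∏ e ∈ insert s(p, q) R, w e x ∂unifCube ι) _
      _ ≤ cutNorm D + #s * cutNorm D := add_le_add (hstep ▸ hfirst) hrest
      _ = #(insert s(p, q) s) * cutNorm D := by
          rw [card_insert_of_notMem he]
          push_cast
          ring

end IsEdgeWeight

section EdgeWeight

variable {ι : Type*} {V : ℝ → ℝ → ℝ}

noncomputable def edgeWeight (V : ℝ → ℝ → ℝ) (e : Sym2 ι) (x : ι → ℝ) : ℝ :=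
  Sym2.lift ⟨fun a b => (V (x a) (x b) + V (x b) (x a)) / 2, fun a b => by ring⟩ e

lemma tDens_eq_integral_prod_edgeWeight {k : ℕ} (F : SimpleGraph (Fin k)) :
    tDens F V = ∫ x, ∏ e ∈ F.edgeFinset, edgeWeight V e x ∂unifCube (Fin k) :=
  rfl

lemma edgeWeight_mk (p q : ι) (x : ι → ℝ) :
    edgeWeight V s(p, q) x = (V (x p) (x q) + V (x q) (x p)) / 2 :=
  rfl

lemma edgeWeight_mk_of_symm (hV : ∀ x y, V x y = V y x) (p q : ι) (x : ι → ℝ) :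
    edgeWeight V s(p, q) x = V (x p) (x q) := by
  rw [edgeWeight_mk, hV (x q)]
  ring

lemma isEdgeWeight_edgeWeight [DecidableEq ι] (hV : Measurable (uncurry V))
    (hV01 : ∀ x y, V x y ∈ Set.Icc (0 : ℝ) 1) : IsEdgeWeight (edgeWeight (ι := ι) V) where
  measurable e := by
    induction e using Sym2.ind with
    | _ a b =>
      exact ((measurable_comp_apply_apply hV a b).add
        (measurable_comp_apply_apply hV b a)).div_const 2
  mem_Icc e x := by
    induction e using Sym2.ind with
    | _ a b =>
      have := hV01 (x a) (x b)
      have := hV01 (x b) (x a)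
      rw [edgeWeight_mk, Set.mem_Icc] at *
      constructor <;> linarith
  update_eq {e i} hi x c := by
    induction e using Sym2.ind with
    | _ a b =>
      have ha : a ≠ i := fun h => hi (h ▸ Sym2.mem_mk_left a b)
      have hb : b ≠ i := fun h => hi (h ▸ Sym2.mem_mk_right a b)
      rw [edgeWeight_mk, edgeWeight_mk, update_of_ne ha, update_of_ne hb]

end EdgeWeight

/-- Counting lemma: for symmetric `U, W : [0,1]² → [0,1]` and every simple graph `F`,
`|t(F,U) - t(F,W)| ≤ |E(F)| ⬝ ‖U - W‖_□`. -/
theorem abs_tDens_sub_tDens_le_card_mul_cutNorm {k : ℕ} (F : SimpleGraph (Fin k))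
    (U W : ℝ → ℝ → ℝ)
    (hUmeas : Measurable (Function.uncurry U)) (hUsymm : ∀ x y, U x y = U y x)
    (hUmem : ∀ x y, U x y ∈ Set.Icc (0 : ℝ) 1)
    (hWmeas : Measurable (Function.uncurry W)) (hWsymm : ∀ x y, W x y = W y x)
    (hWmem : ∀ x y, W x y ∈ Set.Icc (0 : ℝ) 1) :
    |tDens F U - tDens F W| ≤ (F.edgeFinset.card : ℝ) * cutNorm (fun x y => U x y - W x y) := by
  have hD : Measurable (uncurry fun x y => U x y - W x y) := hUmeas.sub hWmeas
  have hDC : ∀ x y, |U x y - W x y| ≤ 1 := fun x y =>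
    abs_sub_le_of_nonneg_of_le (hUmem x y).1 (hUmem x y).2 (hWmem x y).1 (hWmem x y).2
  have huw : ∀ (p q : Fin k) x,
      edgeWeight U s(p, q) x - edgeWeight W s(p, q) x = U (x p) (x q) - W (x p) (x q) :=
    fun p q x => by rw [edgeWeight_mk_of_symm hUsymm, edgeWeight_mk_of_symm hWsymm]
  have hloop : ∀ e ∈ F.edgeFinset, ¬e.IsDiag := fun e he =>
    F.not_isDiag_of_mem_edgeSet (F.mem_edgeFinset.1 he)
  simpa only [prod_empty, mul_one, ← tDens_eq_integral_prod_edgeWeight] using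
    (isEdgeWeight_edgeWeight hUmeas hUmem).abs_integral_prod_mul_prod_sub_le
      (isEdgeWeight_edgeWeight hWmeas hWmem) huw hD hDC hloop (disjoint_empty_right _)
end
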